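/- arXiv:2008.08425 — 3 statements merged into one kernel-verified Lean document; each statement's English description precedes it below -/
import Mathlib

section
/- Let a > 0, D > 0 and t > 0. Then the integral over the region {y ∈ ℝ³ : ‖y‖ ≥ a} of the function y ↦ (a/‖y‖)·erfc((‖y‖ − a)/√(4Dt)) with respect to Lebesgue measure equals 4πDat + 8a²√(πDt). -/
open MeasureTheory Filter Set Real Topology

noncomputable def erf (x : ℝ) : ℝ :=
  (2 / Real.sqrt Real.pi) * ∫ u in (0:ℝ)..x, Real.exp (-u ^ 2)

noncomputable def erfc (x : ℝ) : ℝ := 1 - erf x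

/-!
In spherical coordinates the integral is `4πa ∫_a^∞ r erfc((r - a)/σ) dr` with `σ = √(4Dt)`.
Substituting `r = a + σ s` reduces it to the moments `∫_0^∞ erfc = 1/√π` and
`∫_0^∞ s erfc s = 1/4`, which come from the antiderivatives `x erfc x - e^{-x²}/√π` and
`(2x² - 1) erfc x / 4 - x e^{-x²}/(2√π)`; these vanish at infinity because
`erfc x ≤ e^{-x²}/(x√π)`.
-/

lemma sqrt_pi_ne_zero : √π ≠ 0 := (sqrt_pos.2 pi_pos).ne'

lemma integrableOn_exp_neg_sq (s : Set ℝ) : IntegrableOn (fun u : ℝ => exp (-u ^ 2)) s := by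
  simpa using (integrable_exp_neg_mul_sq one_pos).integrableOn

lemma hasDerivAt_exp_neg_sq (x : ℝ) :
    HasDerivAt (fun u : ℝ => exp (-u ^ 2)) (-2 * x * exp (-x ^ 2)) x := by
  convert (hasDerivAt_pow 2 x).fun_neg.exp using 1
  ring

lemma tendsto_pow_mul_exp_neg_sq_atTop (n : ℕ) :
    Tendsto (fun x : ℝ => x ^ n * exp (-x ^ 2)) atTop (𝓝 0) := by
  refine ((tendsto_rpow_abs_mul_exp_neg_mul_sq_cocompact one_pos n).mono_left
    atTop_le_cocompact).congr' ?_
  filter_upwards [eventually_ge_atTop 0] with x hx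
  simp [abs_of_nonneg hx]

lemma integral_Ioi_mul_exp_neg_sq (x : ℝ) :
    ∫ u in Ioi x, u * exp (-u ^ 2) = exp (-x ^ 2) / 2 := by
  have hderiv : ∀ u ∈ Ici x,
      HasDerivAt (fun u : ℝ => -exp (-u ^ 2) / 2) (u * exp (-u ^ 2)) u := fun u _ =>
    ((hasDerivAt_exp_neg_sq u).fun_neg.div_const 2).congr_deriv (by ring)
  have hint : IntegrableOn (fun u : ℝ => u * exp (-u ^ 2)) (Ioi x) := by
    simpa using (integrable_mul_exp_neg_mul_sq one_pos).integrableOn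
  have hlim : Tendsto (fun u : ℝ => -exp (-u ^ 2) / 2) atTop (𝓝 0) := by
    simpa using (tendsto_pow_mul_exp_neg_sq_atTop 0).neg.div_const 2
  rw [integral_Ioi_of_hasDerivAt_of_tendsto' hderiv hint hlim]
  ring

lemma erfc_eq_integral_Ioi (x : ℝ) : erfc x = 2 / √π * ∫ u in Ioi x, exp (-u ^ 2) := by
  have hgauss : ∫ u in Ioi (0 : ℝ), exp (-u ^ 2) = √π / 2 := by
    simpa using integral_gaussian_Ioi 1
  rw [erfc, erf, ← intervalIntegral.integral_Ioi_sub_Ioi' (integrableOn_exp_neg_sq _)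
    (integrableOn_exp_neg_sq _), hgauss]
  field_simp [sqrt_pi_ne_zero]
  ring

lemma erfc_nonneg (x : ℝ) : 0 ≤ erfc x := by
  have := setIntegral_nonneg (μ := volume) (measurableSet_Ioi (a := x))
    fun u _ => (exp_pos (-u ^ 2)).le
  rw [erfc_eq_integral_Ioi]
  positivity

lemma erfc_zero : erfc 0 = 1 := by simp [erfc, erf]

lemma hasDerivAt_erfc (x : ℝ) : HasDerivAt erfc (-(2 / √π * exp (-x ^ 2))) x :=
  (((continuous_exp.comp (continuous_pow 2).neg).integral_hasStrictDerivAt 0 x).hasDerivAt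
    |>.const_mul (2 / √π)).const_sub 1

lemma erfc_le_exp_neg_sq_div {x : ℝ} (hx : 0 < x) : erfc x ≤ exp (-x ^ 2) / (x * √π) := by
  have hint : IntegrableOn (fun u : ℝ => u * exp (-u ^ 2) / x) (Ioi x) := by
    simpa using ((integrable_mul_exp_neg_mul_sq one_pos).div_const x).integrableOn
  have hle : ∫ u in Ioi x, exp (-u ^ 2) ≤ ∫ u in Ioi x, u * exp (-u ^ 2) / x := by
    refine setIntegral_mono_on (integrableOn_exp_neg_sq _) hint measurableSet_Ioi fun u hu => ?_
    rw [le_div_iff₀ hx, mul_comm]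
    gcongr
    exact hu.out.le
  rw [integral_div, integral_Ioi_mul_exp_neg_sq] at hle
  rw [erfc_eq_integral_Ioi]
  calc 2 / √π * ∫ u in Ioi x, exp (-u ^ 2) ≤ 2 / √π * (exp (-x ^ 2) / 2 / x) := by gcongr
    _ = exp (-x ^ 2) / (x * √π) := by field_simp [sqrt_pi_ne_zero]

lemma tendsto_pow_mul_erfc_atTop (n : ℕ) :
    Tendsto (fun x : ℝ => x ^ n * erfc x) atTop (𝓝 0) := by
  refine tendsto_of_tendsto_of_tendsto_of_le_of_le' tendsto_const_nhds
    (by simpa using (tendsto_pow_mul_exp_neg_sq_atTop n).div_const √π) ?_ ?_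
  · filter_upwards [eventually_ge_atTop 0] with x hx
    exact mul_nonneg (pow_nonneg hx n) (erfc_nonneg x)
  · filter_upwards [eventually_ge_atTop 1] with x hx
    have hx0 : 0 < x := one_pos.trans_le hx
    calc x ^ n * erfc x ≤ x ^ n * (exp (-x ^ 2) / (x * √π)) := by
          gcongr; exact erfc_le_exp_neg_sq_div hx0
      _ ≤ x ^ n * (exp (-x ^ 2) / √π) := by
          gcongr; exact le_mul_of_one_le_left (sqrt_nonneg π) hx
      _ = x ^ n * exp (-x ^ 2) / √π := by ring

lemma hasDerivAt_mul_erfc_sub (x : ℝ) :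
    HasDerivAt (fun x => x * erfc x - exp (-x ^ 2) / √π) (erfc x) x := by
  refine ((hasDerivAt_id x).mul (hasDerivAt_erfc x)).sub
    ((hasDerivAt_exp_neg_sq x).div_const √π) |>.congr_deriv ?_
  field_simp [sqrt_pi_ne_zero]
  simp only [id_eq]
  ring

lemma hasDerivAt_sq_mul_erfc_sub (x : ℝ) :
    HasDerivAt (fun x => (2 * x ^ 2 - 1) / 4 * erfc x - x * exp (-x ^ 2) / (2 * √π))
      (x * erfc x) x := by
  refine (((((hasDerivAt_pow 2 x).const_mul 2).sub_const 1).div_const 4).mul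
    (hasDerivAt_erfc x)).sub (((hasDerivAt_id x).mul (hasDerivAt_exp_neg_sq x)).div_const
      (2 * √π)) |>.congr_deriv ?_
  field_simp [sqrt_pi_ne_zero]
  simp only [id_eq]
  ring

lemma integral_Ioi_add_mul_mul_erfc {p q : ℝ} (hp : 0 ≤ p) (hq : 0 ≤ q) :
    ∫ s in Ioi 0, (p + q * s) * erfc s = p / √π + q / 4 := by
  set Φ := fun x => p * (x * erfc x - exp (-x ^ 2) / √π) +
    q * ((2 * x ^ 2 - 1) / 4 * erfc x - x * exp (-x ^ 2) / (2 * √π))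
  have hderiv : ∀ s ∈ Ici (0 : ℝ), HasDerivAt Φ ((p + q * s) * erfc s) s := fun s _ =>
    ((hasDerivAt_mul_erfc_sub s).const_mul p).add ((hasDerivAt_sq_mul_erfc_sub s).const_mul q)
      |>.congr_deriv (by ring)
  have hnonneg : ∀ s ∈ Ioi (0 : ℝ), 0 ≤ (p + q * s) * erfc s := fun s hs =>
    mul_nonneg (add_nonneg hp (mul_nonneg hq hs.out.le)) (erfc_nonneg s)
  have hlim : Tendsto Φ atTop (𝓝 0) := by
    have h₁ := (tendsto_pow_mul_erfc_atTop 1).sub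
      ((tendsto_pow_mul_exp_neg_sq_atTop 0).div_const √π)
    have h₂ := (((tendsto_pow_mul_erfc_atTop 2).const_mul 2).sub
      (tendsto_pow_mul_erfc_atTop 0)).div_const 4 |>.sub
      ((tendsto_pow_mul_exp_neg_sq_atTop 1).div_const (2 * √π))
    simpa using ((h₁.const_mul p).add (h₂.const_mul q)).congr fun x => by simp only [Φ]; ring
  rw [integral_Ioi_of_hasDerivAt_of_nonneg' hderiv hnonneg hlim]
  simp only [Φ, erfc_zero, zero_pow two_ne_zero, neg_zero, exp_zero]
  field_simp [sqrt_pi_ne_zero]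
  ring

lemma integral_Ioi_comp_sub_div {E : Type*} [NormedAddCommGroup E] [NormedSpace ℝ E]
    (g : ℝ → E) (a : ℝ) {σ : ℝ} (hσ : 0 < σ) :
    ∫ r in Ioi a, g ((r - a) / σ) = σ • ∫ s in Ioi 0, g s := by
  have htrans := (measurePreserving_sub_right volume a).setIntegral_preimage_emb
    (Homeomorph.subRight a).measurableEmbedding (fun s => g (s / σ)) (Ioi 0)
  rw [preimage_sub_const_Ioi, zero_add] at htrans
  rw [htrans]
  simpa [div_eq_mul_inv] using integral_comp_mul_right_Ioi g 0 (inv_pos.2 hσ)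

lemma integral_Ioi_mul_erfc_sub_div {a σ : ℝ} (ha : 0 ≤ a) (hσ : 0 < σ) :
    ∫ r in Ioi a, r * erfc ((r - a) / σ) = σ * (a / √π + σ / 4) := by
  have hr : ∀ r, r * erfc ((r - a) / σ) = (a + σ * ((r - a) / σ)) * erfc ((r - a) / σ) :=
    fun r => by field_simp; ring
  simp_rw [hr]
  rw [integral_Ioi_comp_sub_div (fun s => (a + σ * s) * erfc s) a hσ,
    integral_Ioi_add_mul_mul_erfc ha hσ.le, smul_eq_mul]

lemma integral_fun_norm_fin_three (f : ℝ → ℝ) :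
    ∫ y : EuclideanSpace ℝ (Fin 3), f ‖y‖ = 4 * π * ∫ r in Ioi 0, r ^ 2 * f r := by
  rw [integral_fun_norm_addHaar volume f, finrank_euclideanSpace_fin, measureReal_def,
    EuclideanSpace.volume_ball_fin_three]
  simp only [ENNReal.ofReal_one, one_pow, one_mul, Nat.add_one_sub_one, smul_eq_mul,
    nsmul_eq_mul, Nat.cast_ofNat, ENNReal.toReal_ofReal (by positivity : 0 ≤ π * 4 / 3)]
  ring

lemma setIntegral_fun_norm_fin_three (f : ℝ → ℝ) {a : ℝ} (ha : 0 ≤ a) :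
    ∫ y in {y : EuclideanSpace ℝ (Fin 3) | a ≤ ‖y‖}, f ‖y‖ =
      4 * π * ∫ r in Ioi a, r ^ 2 * f r := by
  have hmeas : MeasurableSet {y : EuclideanSpace ℝ (Fin 3) | a ≤ ‖y‖} :=
    measurableSet_le measurable_const measurable_norm
  have hind : ∀ y : EuclideanSpace ℝ (Fin 3),
      {y | a ≤ ‖y‖}.indicator (fun y => f ‖y‖) y = (Ici a).indicator f ‖y‖ :=
    fun y => indicator_comp_right (fun y => ‖y‖) (s := Ici a)
  have hset : (Ioi 0 ∩ Ici a : Set ℝ) =ᵐ[volume] Ioi a := by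
    have h := (ae_eq_refl (Ioi (0 : ℝ))).inter (Ioi_ae_eq_Ici (a := a) (μ := volume)).symm
    rwa [Ioi_inter_Ioi, max_eq_right ha] at h
  rw [← integral_indicator hmeas, integral_congr_ae (Eventually.of_forall hind),
    integral_fun_norm_fin_three]
  have hmul : ∀ r : ℝ,
      r ^ 2 * (Ici a).indicator f r = (Ici a).indicator (fun r => r ^ 2 * f r) r :=
    fun r => (indicator_mul_right _ (fun r : ℝ => r ^ 2) f).symm
  simp_rw [hmul]
  rw [setIntegral_indicator measurableSet_Ici, setIntegral_congr_set hset]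

/-- The integral over `{y ∈ ℝ³ : ‖y‖ ≥ a}` of `(a/‖y‖)·erfc((‖y‖-a)/√(4Dt))`
equals `4πDat + 8a²√(πDt)` (mean Wiener-sausage volume, Lemma 1). -/
theorem mean_sausage_volume (a D t : ℝ) (ha : 0 < a) (hD : 0 < D) (ht : 0 < t) :
    (∫ y in {y : EuclideanSpace ℝ (Fin 3) | a ≤ ‖y‖},
        (a / ‖y‖) * erfc ((‖y‖ - a) / Real.sqrt (4 * D * t)) ∂volume) =
      4 * Real.pi * D * a * t + 8 * a ^ 2 * Real.sqrt (Real.pi * D * t) := by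
  set σ := √(4 * D * t)
  have hσ : 0 < σ := sqrt_pos.2 (by positivity)
  have hσ_sq : σ ^ 2 = 4 * D * t := sq_sqrt (by positivity)
  have hσ_mul : σ * √π = 2 * √(π * D * t) := by
    rw [← sqrt_mul (by positivity), show 4 * D * t * π = 2 ^ 2 * (π * D * t) by ring,
      sqrt_mul (by positivity), sqrt_sq zero_le_two]
  have hradial : ∀ r ∈ Ioi a, r ^ 2 * (a / r * erfc ((r - a) / σ)) =
      a * (r * erfc ((r - a) / σ)) := fun r hr => by
    field_simp [(ha.trans hr).ne']
  rw [setIntegral_fun_norm_fin_three (fun r => a / r * erfc ((r - a) / σ)) ha.le,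
    setIntegral_congr_fun measurableSet_Ioi hradial, integral_const_mul,
    integral_Ioi_mul_erfc_sub_div ha.le hσ]
  field_simp [sqrt_pi_ne_zero]
  linear_combination (π * √π) * hσ_sq + 4 * a * √π * hσ_mul - 4 * a * σ * sq_sqrt pi_pos.le
end

section
/- Let a, D, μ > 0 and define V(s) := 4πDas + 8a²√(πDs) for s ≥ 0. Then for every t ≥ 0, ∫₀^t μ e^{−μs} V(s) ds + e^{−μt} V(t) = 4πa(D/μ)(1 − e^{−μt}) + 4πa²√(D/μ)·erf(√(μt)). (Equivalently: if τ is an exponential random variable with rate μ, then the expectation of V(min(τ, t)) equals the stated right-hand side.) -/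
/-- The mean Wiener-sausage volume `V(s) = 4πDas + 8a²√(πDs)`. -/
noncomputable def sausageVol (a D s : ℝ) : ℝ :=
  4 * Real.pi * D * a * s + 8 * a ^ 2 * Real.sqrt (Real.pi * D * s)

/-!
If `F(t) := ∫₀ᵗ μ e^{−μs} f(s) ds + e^{−μt} f(t)`, then `F' = e^{−μt} f'` (the two terms
`±μ e^{−μt} f(t)` cancel), so it suffices to check that the right-hand side `R` satisfies
`R(0) = V(0) = 0` and `R'(t) = e^{−μt} V'(t) = e^{−μt} (4πDa + 4a²√(πD)/√t)` for `t > 0`.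
Only continuity is needed at `t = 0`, where `V` and `R` are not differentiable.
-/

open Real Set

theorem integral_mul_exp_neg_mul_add_eq_of_hasDerivAt {f f' g : ℝ → ℝ} {μ a b : ℝ}
    (hab : a ≤ b) (hf : ContinuousOn f (Icc a b)) (hg : ContinuousOn g (Icc a b))
    (hf' : ∀ s ∈ Ioo a b, HasDerivAt f (f' s) s)
    (hg' : ∀ s ∈ Ioo a b, HasDerivAt g (exp (-μ * s) * f' s) s)
    (hga : g a = exp (-μ * a) * f a) :
    (∫ s in a..b, μ * exp (-μ * s) * f s) + exp (-μ * b) * f b = g b := by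
  have hexp : ∀ s, HasDerivAt (fun s => exp (-μ * s)) (exp (-μ * s) * -μ) s := fun s => by
    simpa using ((hasDerivAt_id s).const_mul (-μ)).exp
  have hint : IntervalIntegrable (fun s => μ * exp (-μ * s) * f s) MeasureTheory.volume a b :=
    ((by fun_prop : Continuous fun s => μ * exp (-μ * s)).continuousOn.mul hf
      ).intervalIntegrable_of_Icc hab
  have hftc := intervalIntegral.integral_eq_sub_of_hasDerivAt_of_le hab
    (f := fun s => g s - exp (-μ * s) * f s)
    (hg.sub ((by fun_prop : Continuous fun s => exp (-μ * s)).continuousOn.mul hf))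
    (fun s hs => ((hg' s hs).sub ((hexp s).mul (hf' s hs))).congr_deriv (by ring))
    hint
  rw [hftc, hga]
  ring

theorem hasDerivAt_erf (x : ℝ) : HasDerivAt erf (2 / √π * exp (-x ^ 2)) x :=
  ((Continuous.integral_hasStrictDerivAt (by fun_prop) 0 x).hasDerivAt).const_mul _

@[fun_prop]
theorem continuous_erf : Continuous erf :=
  continuous_iff_continuousAt.2 fun x => (hasDerivAt_erf x).continuousAt

theorem sausageVol_eq {D : ℝ} (hD : 0 ≤ D) (a s : ℝ) :
    sausageVol a D s = 4 * π * D * a * s + 8 * a ^ 2 * √(π * D) * √s := by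
  rw [sausageVol, sqrt_mul (by positivity), mul_assoc (8 * a ^ 2)]

theorem continuous_sausageVol (a D : ℝ) : Continuous (sausageVol a D) := by
  unfold sausageVol
  fun_prop

theorem hasDerivAt_sausageVol {D s : ℝ} (hD : 0 ≤ D) (a : ℝ) (hs : 0 < s) :
    HasDerivAt (sausageVol a D) (4 * π * D * a + 4 * a ^ 2 * √(π * D) / √s) s := by
  rw [funext (sausageVol_eq hD a)]
  refine (((hasDerivAt_id s).const_mul (4 * π * D * a)).add
    ((hasDerivAt_sqrt hs.ne').const_mul (8 * a ^ 2 * √(π * D)))).congr_deriv ?_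
  have := sqrt_pos.2 hs
  field_simp
  ring

theorem hasDerivAt_erf_sqrt_mul {μ s : ℝ} (hμ : 0 < μ) (hs : 0 < s) :
    HasDerivAt (fun s => erf √(μ * s)) (exp (-μ * s) * √μ / (√π * √s)) s := by
  have hμs : 0 < μ * s := mul_pos hμ hs
  have h := (hasDerivAt_erf √(μ * s)).comp s
    (((hasDerivAt_id s).const_mul μ).sqrt hμs.ne')
  refine h.congr_deriv ?_
  simp only [id]
  rw [sq_sqrt hμs.le, sqrt_mul hμ.le]
  field_simp
  ring_nf
  rw [sq_sqrt hμ.le]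

theorem mean_sausage_volume_degradation_general (a D mu : ℝ) (hD : 0 < D)
    (hmu : 0 < mu) (t : ℝ) (ht : 0 ≤ t) :
    (∫ s in (0:ℝ)..t, mu * Real.exp (-mu * s) * sausageVol a D s)
      + Real.exp (-mu * t) * sausageVol a D t =
    4 * Real.pi * a * (D / mu) * (1 - Real.exp (-mu * t))
      + 4 * Real.pi * a ^ 2 * Real.sqrt (D / mu) * erf (Real.sqrt (mu * t)) := by
  refine integral_mul_exp_neg_mul_add_eq_of_hasDerivAt ht (g := fun t =>
    4 * π * a * (D / mu) * (1 - exp (-mu * t)) + 4 * π * a ^ 2 * √(D / mu) * erf √(mu * t))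
    (continuous_sausageVol a D).continuousOn (Continuous.continuousOn (by fun_prop))
    (fun s hs => hasDerivAt_sausageVol hD.le a hs.1) (fun s hs => ?_) (by simp [sausageVol, erf])
  have hexp := ((hasDerivAt_id' s).const_mul (-mu)).exp
  refine (((hexp.const_sub 1).const_mul (4 * π * a * (D / mu))).add
    ((hasDerivAt_erf_sqrt_mul hmu hs.1).const_mul (4 * π * a ^ 2 * √(D / mu)))).congr_deriv ?_
  rw [sqrt_div hD.le, sqrt_mul pi_pos.le]
  have := sqrt_pos.2 hs.1
  field_simp
  linear_combination -(a ^ 2 * √D) * mul_self_sqrt pi_pos.le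

/-- The expectation of `V(min(τ,t))` for an exponential degradation time `τ` of rate `μ`:
`∫₀ᵗ μ e^{−μs} V(s) ds + e^{−μt} V(t) = 4πa(D/μ)(1 − e^{−μt}) + 4πa²√(D/μ)·erf(√(μt))`
(Lemma 2). -/
theorem mean_sausage_volume_degradation (a D mu : ℝ) (ha : 0 < a) (hD : 0 < D)
    (hmu : 0 < mu) (t : ℝ) (ht : 0 ≤ t) :
    (∫ s in (0:ℝ)..t, mu * Real.exp (-mu * s) * sausageVol a D s)
      + Real.exp (-mu * t) * sausageVol a D t =
    4 * Real.pi * a * (D / mu) * (1 - Real.exp (-mu * t))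
      + 4 * Real.pi * a ^ 2 * Real.sqrt (D / mu) * erf (Real.sqrt (mu * t)) :=
  mean_sausage_volume_degradation_general a D mu hD hmu t ht
end

section
/- Let a, D, λ > 0 and define t_c := (a²/(πD))·(√(1 + 1/(4a³λ)) − 1)². Then t_c > 0 and 4πλDa·t_c + 8a²λ√(πD·t_c) = 1; consequently 1 − exp(−4πλDa·t_c − 8a²λ√(πD·t_c)) = 1 − 1/e. Moreover, t_c is the unique t ≥ 0 with 4πλDa·t + 8a²λ√(πDt) = 1. -/
/-!
Writing `u = √(πDt)`, the exponent is `4λa·u² + 8a²λ·u = 4λa((u + a)² − a²)`, so it equals `1`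
exactly when `u + a = a·√(1 + 1/(4a³λ))`, i.e. at `t = t_c`. Uniqueness holds because the
exponent is strictly increasing in `t`.
-/

open Real

noncomputable def hittingExponent (a D lam t : ℝ) : ℝ :=
  4 * π * lam * D * a * t + 8 * a ^ 2 * lam * √(π * D * t)

noncomputable def timeConstant (a D lam : ℝ) : ℝ :=
  a ^ 2 / (π * D) * (√(1 + 1 / (4 * a ^ 3 * lam)) - 1) ^ 2

section

variable {a D lam : ℝ}

lemma hittingExponent_strictMono (ha : 0 < a) (hD : 0 < D) (hlam : 0 < lam) :
    StrictMono (hittingExponent a D lam) := by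
  have hlinear : StrictMono fun t : ℝ => 4 * π * lam * D * a * t :=
    strictMono_mul_left_of_pos (by positivity)
  have hsqrt : Monotone fun t : ℝ => 8 * a ^ 2 * lam * √(π * D * t) := fun x y hxy => by
    have : 0 ≤ π * D := by positivity
    dsimp only
    gcongr
  exact hlinear.add_monotone hsqrt

lemma hittingExponent_eq_of_sqrt_eq {t u : ℝ} (hu : 0 ≤ u) (ht : π * D * t = u ^ 2) :
    hittingExponent a D lam t = 4 * lam * a * ((u + a) ^ 2 - a ^ 2) := by
  have hsqrt : √(π * D * t) = u := by rw [ht, sqrt_sq hu]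
  rw [hittingExponent, hsqrt]
  linear_combination (4 * lam * a) * ht

lemma one_lt_sqrt_one_add_inv (ha : 0 < a) (hlam : 0 < lam) :
    1 < √(1 + 1 / (4 * a ^ 3 * lam)) := by
  rw [lt_sqrt zero_le_one]
  have : 0 < 1 / (4 * a ^ 3 * lam) := by positivity
  linarith

lemma timeConstant_pos (ha : 0 < a) (hD : 0 < D) (hlam : 0 < lam) :
    0 < timeConstant a D lam := by
  have := one_lt_sqrt_one_add_inv ha hlam
  unfold timeConstant
  have : 0 < (√(1 + 1 / (4 * a ^ 3 * lam)) - 1) ^ 2 := by nlinarith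
  positivity

lemma hittingExponent_timeConstant (ha : 0 < a) (hD : 0 < D) (hlam : 0 < lam) :
    hittingExponent a D lam (timeConstant a D lam) = 1 := by
  set s := √(1 + 1 / (4 * a ^ 3 * lam)) with hs
  have hs1 : 1 < s := one_lt_sqrt_one_add_inv ha hlam
  have hs_sq : s ^ 2 = 1 + 1 / (4 * a ^ 3 * lam) := sq_sqrt (by positivity)
  have hpiD : π * D ≠ 0 := by positivity
  have hsqrt : π * D * timeConstant a D lam = (a * (s - 1)) ^ 2 := by
    rw [timeConstant, ← hs]
    field_simp
  rw [hittingExponent_eq_of_sqrt_eq (by nlinarith) hsqrt]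
  calc 4 * lam * a * ((a * (s - 1) + a) ^ 2 - a ^ 2) = 4 * a ^ 3 * lam * (s ^ 2 - 1) := by ring
    _ = 1 := by rw [hs_sq]; field_simp; ring

end

/-- Remark 1: the time constant `t_c = (a²/(πD))(√(1 + 1/(4a³λ)) − 1)²` is positive,
satisfies `4πλDa·t_c + 8a²λ√(πD·t_c) = 1` (hence the hitting probability at `t_c`
equals `1 − 1/e`), and is the unique nonnegative solution of that equation. -/
theorem time_constant (a D lam : ℝ) (ha : 0 < a) (hD : 0 < D) (hlam : 0 < lam)
    (tc : ℝ)
    (htc : tc = a ^ 2 / (Real.pi * D) *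
      (Real.sqrt (1 + 1 / (4 * a ^ 3 * lam)) - 1) ^ 2) :
    0 < tc ∧
    4 * Real.pi * lam * D * a * tc + 8 * a ^ 2 * lam * Real.sqrt (Real.pi * D * tc) = 1 ∧
    1 - Real.exp (-(4 * Real.pi * lam * D * a * tc)
        - 8 * a ^ 2 * lam * Real.sqrt (Real.pi * D * tc)) = 1 - 1 / Real.exp 1 ∧
    ∀ t : ℝ, 0 ≤ t →
      4 * Real.pi * lam * D * a * t + 8 * a ^ 2 * lam * Real.sqrt (Real.pi * D * t) = 1 →
      t = tc := by
  have hexp : hittingExponent a D lam tc = 1 := htc ▸ hittingExponent_timeConstant ha hD hlam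
  refine ⟨htc ▸ timeConstant_pos ha hD hlam, hexp, ?_, fun t _ ht ↦ ?_⟩
  · rw [← neg_add', show _ + _ = (1 : ℝ) from hexp, exp_neg, one_div]
  · exact hittingExponent_strictMono ha hD hlam |>.injective (ht.trans hexp.symm)
end
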